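/- arXiv:1904.08451 — 6 statements merged into one kernel-verified Lean document; each statement's English description precedes it below -/
import Mathlib

section
/- The map sending the coefficients of a monic complex polynomial of degree n to its multiset of roots (with multiplicity) is a homeomorphism from ℂⁿ onto the space ℂⁿ/Sₙ of unordered n-tuples of complex numbers with the quotient topology. -/
/-!
Vieta's formulas make the map `coeffsOfRoots`, sending an ordered tuple of roots to the
lower coefficients of `∏ (X - vⱼ)`, continuous; it is invariant under permutations and so
descends to the quotient by `Sₙ`. The descended map is injective because `∏ (X - vⱼ)` has
root multiset `{vⱼ}`, and surjective because every monic polynomial over an algebraically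
closed field splits. Cauchy's bound on the roots of a monic polynomial makes `coeffsOfRoots`
proper, hence closed, and a closed continuous bijection is a homeomorphism.
-/

open Polynomial Finset

theorem Multiset.exists_map_univ_eq_of_card_eq {α : Type*} {s : Multiset α} {n : ℕ}
    (hs : Multiset.card s = n) : ∃ v : Fin n → α, univ.val.map v = s := by
  subst hs
  refine ⟨fun i => s.toList[i.val]'(by simp), ?_⟩
  rw [Fin.univ_val_map, ← s.coe_toList]
  congr 1
  exact List.ext_getElem (by simp) fun i _ _ => by simp [Fin.cast]

theorem Fintype.exists_perm_comp_eq_of_map_univ_eq {ι α : Type*} [Fintype ι] {f g : ι → α}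
    (h : univ.val.map f = univ.val.map g) : ∃ σ : Equiv.Perm ι, f ∘ σ = g := by
  classical
  have hfiber : ∀ c, Fintype.card {i // g i = c} = Fintype.card {i // f i = c} := fun c => by
    have hcount := congrArg (Multiset.count c) h
    simp only [Multiset.count_map] at hcount
    simpa [Fintype.card_subtype, Finset.card, Finset.filter_val, eq_comm] using hcount.symm
  exact ⟨Equiv.ofFiberEquiv fun c => Fintype.equivOfCardEq (hfiber c),
    _root_.funext (Equiv.ofFiberEquiv_map _)⟩

namespace Polynomial

variable {n : ℕ}

section CommRing

variable {R : Type*} [CommRing R]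

noncomputable def monicOfCoeffs (a : Fin n → R) : R[X] :=
  X ^ n + ∑ i : Fin n, C (a i) * X ^ (i : ℕ)

noncomputable def coeffsOfRoots (v : Fin n → R) (i : Fin n) : R :=
  (∏ j, (X - C (v j))).coeff i

theorem coeff_monicOfCoeffs (a : Fin n → R) (i : Fin n) : (monicOfCoeffs a).coeff i = a i := by
  simp only [monicOfCoeffs, coeff_add, coeff_X_pow, finsetSum_coeff, coeff_C_mul,
    if_neg i.isLt.ne, zero_add, Fin.val_inj, mul_ite, mul_one, mul_zero]
  simp

theorem degree_sum_C_mul_X_pow_lt (a : Fin n → R) :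
    (∑ i : Fin n, C (a i) * X ^ (i : ℕ)).degree < (n : WithBot ℕ) := by
  refine (degree_sum_le _ _).trans_lt ((Finset.sup_lt_iff (WithBot.bot_lt_coe n)).2 fun i _ => ?_)
  exact (degree_C_mul_X_pow_le _ _).trans_lt (WithBot.coe_lt_coe.2 i.isLt)

theorem monic_monicOfCoeffs (a : Fin n → R) : (monicOfCoeffs a).Monic :=
  monic_X_pow_add (degree_sum_C_mul_X_pow_lt a)

theorem natDegree_monicOfCoeffs [Nontrivial R] (a : Fin n → R) :
    (monicOfCoeffs a).natDegree = n := by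
  rw [monicOfCoeffs, natDegree_add_eq_left_of_degree_lt, natDegree_X_pow]
  simpa only [degree_X_pow] using degree_sum_C_mul_X_pow_lt a

theorem monicOfCoeffs_coeff_eq {p : R[X]} (hm : p.Monic) (hd : p.natDegree = n) :
    monicOfCoeffs (fun i : Fin n => p.coeff i) = p := by
  conv_rhs => rw [p.as_sum_range_C_mul_X_pow, hd, sum_range_succ, ← hd, hm.coeff_natDegree]
  rw [monicOfCoeffs, hd, Fin.sum_univ_eq_sum_range (fun i => C (p.coeff i) * X ^ i), map_one,
    one_mul, add_comm]

theorem prod_X_sub_C_eq_multiset_prod (v : Fin n → R) :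
    ∏ j, (X - C (v j)) = ((univ.val.map v).map fun a => X - C a).prod := by
  rw [Multiset.map_map]
  rfl

theorem monicOfCoeffs_coeffsOfRoots [Nontrivial R] (v : Fin n → R) :
    monicOfCoeffs (coeffsOfRoots v) = ∏ j, (X - C (v j)) :=
  monicOfCoeffs_coeff_eq (monic_prod_X_sub_C v univ) (by simp)

theorem coeffsOfRoots_eq_of_monicOfCoeffs_eq {a v : Fin n → R}
    (h : monicOfCoeffs a = ∏ j, (X - C (v j))) : coeffsOfRoots v = a := by
  funext i
  rw [coeffsOfRoots, ← h, coeff_monicOfCoeffs]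

theorem coeffsOfRoots_comp_perm (v : Fin n → R) (σ : Equiv.Perm (Fin n)) :
    coeffsOfRoots (v ∘ σ) = coeffsOfRoots v := by
  funext i
  rw [coeffsOfRoots, coeffsOfRoots, ← Equiv.prod_comp σ (fun j => X - C (v j))]
  rfl

theorem coeffsOfRoots_apply (v : Fin n → R) (i : Fin n) :
    coeffsOfRoots v i = ∑ t ∈ univ.powersetCard (n - i), ∏ j ∈ t, -v j := by
  simp_rw [coeffsOfRoots, sub_eq_add_neg, ← map_neg C]
  simpa using Finset.prod_X_add_C_coeff univ (fun j => -v j) (k := i) (by simp [i.isLt.le])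

theorem continuous_coeffsOfRoots [TopologicalSpace R] [IsTopologicalRing R] :
    Continuous (coeffsOfRoots : (Fin n → R) → Fin n → R) :=
  continuous_pi fun i => by simp_rw [coeffsOfRoots_apply]; fun_prop

theorem exists_perm_comp_eq_of_coeffsOfRoots_eq [IsDomain R] {v w : Fin n → R}
    (h : coeffsOfRoots v = coeffsOfRoots w) : ∃ σ : Equiv.Perm (Fin n), v ∘ σ = w := by
  apply Fintype.exists_perm_comp_eq_of_map_univ_eq
  rw [← roots_multiset_prod_X_sub_C (univ.val.map v),
    ← roots_multiset_prod_X_sub_C (univ.val.map w), ← prod_X_sub_C_eq_multiset_prod,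
    ← prod_X_sub_C_eq_multiset_prod, ← monicOfCoeffs_coeffsOfRoots,
    ← monicOfCoeffs_coeffsOfRoots, h]

end CommRing

theorem exists_monicOfCoeffs_eq_prod_X_sub_C {K : Type*} [Field K] [IsAlgClosed K]
    (a : Fin n → K) : ∃ v : Fin n → K, monicOfCoeffs a = ∏ j, (X - C (v j)) := by
  have hcard : Multiset.card (monicOfCoeffs a).roots = (monicOfCoeffs a).natDegree :=
    splits_iff_card_roots.mp (IsAlgClosed.splits _)
  obtain ⟨v, hv⟩ :=
    Multiset.exists_map_univ_eq_of_card_eq (hcard.trans (natDegree_monicOfCoeffs a))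
  refine ⟨v, ?_⟩
  rw [prod_X_sub_C_eq_multiset_prod, hv,
    prod_multiset_X_sub_C_of_monic_of_roots_card_eq (monic_monicOfCoeffs a) hcard]

section NormedField

variable {K : Type*} [NormedField K]

theorem cauchyBound_monicOfCoeffs_le (a : Fin n → K) :
    cauchyBound (monicOfCoeffs a) ≤ ‖a‖₊ + 1 := by
  rw [cauchyBound, (monic_monicOfCoeffs a).leadingCoeff, nnnorm_one, div_one,
    natDegree_monicOfCoeffs]
  gcongr
  refine Finset.sup_le fun i hi => ?_
  have hi : i < n := mem_range.1 hi
  simpa [coeff_monicOfCoeffs a ⟨i, hi⟩] using nnnorm_le_pi_nnnorm a ⟨i, hi⟩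

theorem norm_le_norm_coeffsOfRoots_add_one (v : Fin n → K) :
    ‖v‖ ≤ ‖coeffsOfRoots v‖ + 1 := by
  refine (pi_norm_le_iff_of_nonneg (by positivity)).2 fun j => ?_
  have hroot : (monicOfCoeffs (coeffsOfRoots v)).IsRoot (v j) := by
    rw [monicOfCoeffs_coeffsOfRoots, IsRoot, eval_prod]
    exact prod_eq_zero (mem_univ j) (by simp)
  have hlt := (hroot.norm_lt_cauchyBound (monic_monicOfCoeffs _).ne_zero).trans_le
    (cauchyBound_monicOfCoeffs_le _)
  exact_mod_cast hlt.le

theorem isProperMap_coeffsOfRoots [ProperSpace K] :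
    IsProperMap (coeffsOfRoots : (Fin n → K) → Fin n → K) := by
  refine isProperMap_iff_isCompact_preimage.2 ⟨continuous_coeffsOfRoots, fun S hS => ?_⟩
  refine Metric.isCompact_of_isClosed_isBounded
    (hS.isClosed.preimage continuous_coeffsOfRoots) ?_
  obtain ⟨r, hr⟩ := isBounded_iff_forall_norm_le.1 hS.isBounded
  exact isBounded_iff_forall_norm_le.2
    ⟨r + 1, fun v hv => (norm_le_norm_coeffsOfRoots_add_one v).trans (by linarith [hr _ hv])⟩

end NormedField

noncomputable def coeffsOfRootsQuot (R : Type*) [CommRing R] (n : ℕ) :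
    Quotient (MulAction.orbitRel (DomMulAct (Equiv.Perm (Fin n))) (Fin n → R)) → Fin n → R :=
  Quotient.lift coeffsOfRoots fun _ w ⟨g, hg⟩ =>
    hg ▸ coeffsOfRoots_comp_perm w (DomMulAct.mk.symm g)

theorem coeffsOfRootsQuot_injective {R : Type*} [CommRing R] [IsDomain R] :
    Function.Injective (coeffsOfRootsQuot R n) := by
  rintro ⟨v⟩ ⟨w⟩ h
  obtain ⟨σ, rfl⟩ := exists_perm_comp_eq_of_coeffsOfRoots_eq h
  exact (Quotient.sound (s := MulAction.orbitRel _ _) ⟨DomMulAct.mk σ, rfl⟩).symm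

theorem coeffsOfRootsQuot_surjective {K : Type*} [Field K] [IsAlgClosed K] :
    Function.Surjective (coeffsOfRootsQuot K n) := fun a =>
  let ⟨v, hv⟩ := exists_monicOfCoeffs_eq_prod_X_sub_C a
  ⟨Quotient.mk'' v, coeffsOfRoots_eq_of_monicOfCoeffs_eq hv⟩

theorem continuous_coeffsOfRootsQuot {R : Type*} [CommRing R] [TopologicalSpace R]
    [IsTopologicalRing R] : Continuous (coeffsOfRootsQuot R n) :=
  continuous_coeffsOfRoots.quotient_lift _

theorem isClosedMap_coeffsOfRootsQuot {K : Type*} [NormedField K] [ProperSpace K] :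
    IsClosedMap (coeffsOfRootsQuot K n) :=
  IsClosedMap.of_comp_surjective Quotient.mk_surjective continuous_quotient_mk'
    isProperMap_coeffsOfRoots.isClosedMap

noncomputable def coeffsOfRootsHomeomorph (K : Type*) [NormedField K] [IsAlgClosed K]
    [ProperSpace K] (n : ℕ) :
    Quotient (MulAction.orbitRel (DomMulAct (Equiv.Perm (Fin n))) (Fin n → K)) ≃ₜ (Fin n → K) :=
  (Equiv.ofBijective _ ⟨coeffsOfRootsQuot_injective, coeffsOfRootsQuot_surjective⟩)
    |>.toHomeomorphOfContinuousClosed continuous_coeffsOfRootsQuot isClosedMap_coeffsOfRootsQuot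

end Polynomial

/-- The map sending the coefficients of a monic complex polynomial of
degree `n` to its multiset of roots is a homeomorphism from `ℂⁿ` onto `ℂⁿ/Sₙ`
(unordered `n`-tuples with the quotient topology). -/
theorem coeffs_to_roots_homeomorph (n : ℕ) :
    ∃ h : (Fin n → ℂ) ≃ₜ
      Quotient (MulAction.orbitRel (DomMulAct (Equiv.Perm (Fin n))) (Fin n → ℂ)),
      ∀ a : Fin n → ℂ, ∃ v : Fin n → ℂ,
        h a = Quotient.mk _ v ∧
        (X ^ n + ∑ i : Fin n, C (a i) * X ^ (i : ℕ) : ℂ[X]) =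
          ∏ i : Fin n, (X - C (v i)) := by
  refine ⟨(coeffsOfRootsHomeomorph ℂ n).symm, fun a => ?_⟩
  obtain ⟨v, hv⟩ := exists_monicOfCoeffs_eq_prod_X_sub_C a
  refine ⟨v, ?_, hv⟩
  exact (Homeomorph.symm_apply_eq _).2 (coeffsOfRoots_eq_of_monicOfCoeffs_eq hv).symm
end

section
/- The set of coefficient vectors (a₀, …, a_{n-1}) ∈ ℝⁿ for which the monic polynomial λⁿ + a_{n-1}λ^{n-1} + ⋯ + a₀ has all roots with strictly negative real part is an open subset of ℝⁿ. -/
/-!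
Roots of a monic polynomial are bounded by `max 1 (∑ ‖aᵢ‖)`, a bound that is locally uniform in
the coefficients. Hence near a given coefficient vector, a root outside an open set `U` would have
to lie in the compact set `closedBall 0 R \ U`, on which the given polynomial has no zeros; by the
tube lemma the same holds for all nearby coefficient vectors.
-/

open Polynomial Filter Topology Metric

section RootBound

variable {A : Type*} [NormedDivisionRing A]

theorem norm_le_of_pow_add_sum_eq_zero {n : ℕ} (c : Fin n → A) {z : A}
    (hz : z ^ n + ∑ i : Fin n, c i * z ^ (i : ℕ) = 0) :
    ‖z‖ ≤ max 1 (∑ i : Fin n, ‖c i‖) := by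
  by_contra! h
  have h1 : 1 < ‖z‖ := (le_max_left _ _).trans_lt h
  have hS : ∑ i : Fin n, ‖c i‖ < ‖z‖ := (le_max_right _ _).trans_lt h
  obtain _ | m := n
  · simp at hz
  have hle : ‖z‖ ^ (m + 1) ≤ (∑ i : Fin (m + 1), ‖c i‖) * ‖z‖ ^ m :=
    calc ‖z‖ ^ (m + 1) = ‖∑ i : Fin (m + 1), c i * z ^ (i : ℕ)‖ := by
          rw [← norm_pow, eq_neg_of_add_eq_zero_left hz, norm_neg]
      _ ≤ ∑ i : Fin (m + 1), ‖c i‖ * ‖z‖ ^ m := by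
          refine (norm_sum_le _ _).trans (Finset.sum_le_sum fun i _ => ?_)
          rw [norm_mul, norm_pow]
          gcongr
          · exact h1.le
          · exact Nat.lt_succ_iff.mp i.isLt
      _ = (∑ i : Fin (m + 1), ‖c i‖) * ‖z‖ ^ m := (Finset.sum_mul ..).symm
  have hlt : (∑ i : Fin (m + 1), ‖c i‖) * ‖z‖ ^ m < ‖z‖ ^ (m + 1) := by
    rw [pow_succ']
    exact mul_lt_mul_of_pos_right hS (pow_pos (one_pos.trans h1) _)
  exact hle.not_gt hlt

theorem isOpen_setOf_forall_root_mem [ProperSpace A] {U : Set A} (hU : IsOpen U) (n : ℕ) :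
    IsOpen {c : Fin n → A | ∀ z : A, z ^ n + ∑ i : Fin n, c i * z ^ (i : ℕ) = 0 → z ∈ U} := by
  refine isOpen_iff_mem_nhds.2 fun c hc => ?_
  set R := max 1 (∑ i : Fin n, ‖c i‖ + 1)
  have hbound : ∀ᶠ d in 𝓝 c, ∀ z : A, z ^ n + ∑ i : Fin n, d i * z ^ (i : ℕ) = 0 → ‖z‖ ≤ R := by
    have hcont : Continuous fun d : Fin n → A => ∑ i : Fin n, ‖d i‖ := by fun_prop
    filter_upwards [hcont.continuousAt.eventually_lt continuousAt_const (lt_add_one _)]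
      with d hd z hz
    exact (norm_le_of_pow_add_sum_eq_zero d hz).trans (max_le_max le_rfl hd.le)
  have hK : IsCompact (closedBall 0 R \ U) := (isCompact_closedBall 0 R).diff hU
  have hnz : ∀ᶠ d in 𝓝 c, ∀ z ∈ closedBall 0 R \ U,
      z ^ n + ∑ i : Fin n, d i * z ^ (i : ℕ) ≠ 0 := by
    refine hK.eventually_forall_of_forall_eventually fun z hz => ?_
    have hcont : Continuous fun p : (Fin n → A) × A =>
        p.2 ^ n + ∑ i : Fin n, p.1 i * p.2 ^ (i : ℕ) := by fun_prop
    exact hcont.continuousAt.eventually_ne fun h => hz.2 (hc z h)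
  filter_upwards [hbound, hnz] with d hd_bound hd_ne z hz
  by_contra hzU
  exact hd_ne z ⟨mem_closedBall_zero_iff.2 (hd_bound z hz), hzU⟩ hz

end RootBound

/-- The set of coefficient vectors in `ℝⁿ` whose monic polynomial
`λⁿ + a_{n-1}λ^{n-1} + ⋯ + a₀` has all roots with negative real part is open. -/
theorem hurwitz_coeff_set_isOpen (n : ℕ) :
    IsOpen {a : Fin n → ℝ |
      ∀ z : ℂ, aeval z (X ^ n + ∑ i : Fin n, C (a i) * X ^ (i : ℕ) : ℝ[X]) = 0 →
        z.re < 0} := by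
  have hopen := isOpen_setOf_forall_root_mem
    (isOpen_lt Complex.continuous_re continuous_const : IsOpen {z : ℂ | z.re < 0}) n
  have hcoe : Continuous fun (a : Fin n → ℝ) (i : Fin n) => (a i : ℂ) := by fun_prop
  simpa [Complex.coe_algebraMap] using hopen.preimage hcoe
end

section
/- The set {v ∈ ℂⁿ : Re(vᵢ) < 0 for all i, and the multiset {v₁,…,vₙ} is closed under complex conjugation}, viewed as a subset of the quotient ℂⁿ/Sₙ, is path-connected: every such unordered tuple is connected by a continuous path within the set to the constant tuple (−1, …, −1). -/
/-- In the quotient `ℂⁿ/Sₙ`, the set of unordered `n`-tuples whose entries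
all have negative real part and which are closed under complex conjugation is
path-connected: every such tuple is joined within the set to `(−1, …, −1)`. -/
theorem neg_re_conj_invariant_tuples_pathConnected (n : ℕ) :
    ∀ q ∈ {q : Quotient (MulAction.orbitRel (DomMulAct (Equiv.Perm (Fin n)))
        (Fin n → ℂ)) |
      ∃ v : Fin n → ℂ, q = Quotient.mk _ v ∧ (∀ i, (v i).re < 0) ∧
        ∃ σ : Equiv.Perm (Fin n), ∀ i, starRingEnd ℂ (v i) = v (σ i)},
      JoinedIn {q : Quotient (MulAction.orbitRel (DomMulAct (Equiv.Perm (Fin n)))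
        (Fin n → ℂ)) |
      ∃ v : Fin n → ℂ, q = Quotient.mk _ v ∧ (∀ i, (v i).re < 0) ∧
        ∃ σ : Equiv.Perm (Fin n), ∀ i, starRingEnd ℂ (v i) = v (σ i)}
      q (Quotient.mk _ (fun _ => (-1 : ℂ))) := by
  rintro q ⟨v, rfl, hre, σ, hσ⟩
  let γ : Path v (fun _ => (-1 : ℂ)) :=
  { toFun := fun t i => ((1 - (t : ℝ) : ℝ) : ℂ) * v i - ((t : ℝ) : ℂ),
    continuous_toFun := by
      apply continuous_pi
      intro i
      fun_prop
    source' := by ext i; simp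
    target' := by ext i; simp }
  refine ⟨γ.map continuous_quotient_mk', fun t => ?_⟩
  refine ⟨fun i => ((1 - (t : ℝ) : ℝ) : ℂ) * v i - ((t : ℝ) : ℂ), rfl, ?_, σ, ?_⟩
  · intro i
    have h1 := hre i
    have h2 := t.2.1
    have h3 := t.2.2
    simp only [Complex.sub_re, Complex.mul_re, Complex.ofReal_re, Complex.ofReal_im]
    rcases h2.eq_or_lt with h | h
    · rw [← h]; simpa using h1
    · nlinarith [mul_nonpos_of_nonneg_of_nonpos (by linarith : (0:ℝ) ≤ 1 - (t : ℝ)) h1.le]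
  · intro i
    simp [map_sub, map_mul, Complex.conj_ofReal, hσ i]
end

section
/- For a controllable pair (A, b) with A ∈ M_n(ℝ), b ∈ ℝⁿ, the set of Hurwitz stabilizing state feedback gains H_x = {k ∈ ℝⁿ : all eigenvalues of A − b kᵀ have negative real part} is path-connected. -/
open Polynomial Matrix

/-!
By the matrix determinant lemma, `charpoly (A - b kᵀ) = charpoly A + kᵀ adj (X - A) b`, so the
coefficients of `X ^ j`, `j < n`, of `charpoly (A - b kᵀ)` depend affinely on `k`; the linear part
has rows `w j`, the coefficients of `adj (X - A) b`. Comparing coefficients in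
`(X - A) adj (X - A) b = charpoly A • b` gives `w (n - 1) = b`,
`A w (j + 1) = w j - a (j + 1) b` and `A w 0 = -a 0 b` (`a j` the coefficients of `charpoly A`),
so the span of the `w j` is `A`-invariant and contains `b`. By controllability it is everything,
and the affine map is a homeomorphism from the gains onto the coefficient vectors of the monic
Hurwitz polynomials of degree `n`. That set is path-connected: moving every root of a Hurwitz
polynomial along the segment to `-1` keeps it in the open left half plane, changes the
coefficients continuously, and ends at `(X + 1) ^ n`.
-/

namespace Matrix

variable {R : Type*} [CommRing R]

section determinant

variable {m : Type*} [Fintype m] [DecidableEq m]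

theorem det_add_vecMulVec_of_isUnit {M : Matrix m m R} (hM : IsUnit M.det) (u v : m → R) :
    (M + vecMulVec u v).det = M.det + v ⬝ᵥ (M.adjugate *ᵥ u) := by
  rw [vecMulVec_eq Unit, det_add_replicateCol_mul_replicateRow hM, Matrix.mul_assoc,
    ← replicateCol_mulVec, det_unique (1 + _ : Matrix Unit Unit R), add_apply, one_apply_eq,
    replicateRow_mul_replicateCol_apply, inv_def, smul_mulVec, dotProduct_smul, smul_eq_mul,
    mul_add, mul_one, ← mul_assoc, Ring.mul_inverse_cancel _ hM, one_mul]

theorem det_add_vecMulVec_of_det_ne_zero [IsDomain R] {M : Matrix m m R} (hM : M.det ≠ 0)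
    (u v : m → R) : (M + vecMulVec u v).det = M.det + v ⬝ᵥ (M.adjugate *ᵥ u) := by
  let f : R →+* FractionRing R := algebraMap R (FractionRing R)
  have hf : Function.Injective f := IsFractionRing.injective R _
  have hdet : IsUnit (f.mapMatrix M).det := by
    rw [← RingHom.map_det]; exact (map_ne_zero_iff f hf |>.mpr hM).isUnit
  apply hf
  have hmap : f.mapMatrix (M + vecMulVec u v) = f.mapMatrix M + vecMulVec (f ∘ u) (f ∘ v) := by
    ext i j; simp [vecMulVec_apply]
  have hmulVec : f ∘ (M.adjugate *ᵥ u) = (f.mapMatrix M).adjugate *ᵥ (f ∘ u) := by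
    ext i; rw [Function.comp_apply, RingHom.map_mulVec, ← RingHom.map_adjugate]; rfl
  rw [RingHom.map_det, hmap, det_add_vecMulVec_of_isUnit hdet, map_add, RingHom.map_det,
    RingHom.map_dotProduct, hmulVec]

end determinant

theorem coeff_mulVec_map_C {ι : Type*} [Fintype ι] (A : Matrix ι ι R) (y : ι → R[X])
    (j : ℕ) (i : ι) : ((A.map C *ᵥ y) i).coeff j = (A *ᵥ fun q => (y q).coeff j) i := by
  simp [mulVec, dotProduct, finsetSum_coeff, coeff_C_mul]

section adjugateCharmatrixCoeff

variable {ι : Type*} [Fintype ι] [DecidableEq ι] (A : Matrix ι ι R) (b : ι → R)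

noncomputable def adjugateCharmatrixCoeff (j : ℕ) : ι → R :=
  fun i => (((charmatrix A).adjugate *ᵥ (C ∘ b)) i).coeff j

theorem charpoly_sub_vecMulVec [IsDomain R] (k : ι → R) :
    (A - vecMulVec b k).charpoly =
      A.charpoly + (C ∘ k) ⬝ᵥ ((charmatrix A).adjugate *ᵥ (C ∘ b)) := by
  have h : charmatrix (A - vecMulVec b k) = charmatrix A + vecMulVec (C ∘ b) (C ∘ k) := by
    ext i j : 1
    simp only [charmatrix_apply, sub_apply, add_apply, vecMulVec_apply, Function.comp_apply,
      map_sub, map_mul]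
    ring
  rw [charpoly, h, det_add_vecMulVec_of_det_ne_zero (charpoly_monic A).ne_zero, charpoly]

theorem coeff_charpoly_sub_vecMulVec [IsDomain R] (k : ι → R) (j : ℕ) :
    (A - vecMulVec b k).charpoly.coeff j =
      A.charpoly.coeff j + adjugateCharmatrixCoeff A b j ⬝ᵥ k := by
  simp [charpoly_sub_vecMulVec, dotProduct, finsetSum_coeff, coeff_C_mul, adjugateCharmatrixCoeff,
    mul_comm]

theorem charmatrix_mulVec (y : ι → R[X]) :
    charmatrix A *ᵥ y = (X : R[X]) • y - A.map C *ᵥ y := by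
  ext i
  simp [charmatrix, sub_mulVec]

theorem charmatrix_mulVec_adjugate_mulVec :
    charmatrix A *ᵥ ((charmatrix A).adjugate *ᵥ (C ∘ b)) = A.charpoly • (C ∘ b) := by
  rw [mulVec_mulVec, mul_adjugate, smul_mulVec, one_mulVec, charpoly]

theorem mulVec_adjugateCharmatrixCoeff_succ (j : ℕ) :
    A *ᵥ adjugateCharmatrixCoeff A b (j + 1) =
      adjugateCharmatrixCoeff A b j - A.charpoly.coeff (j + 1) • b := by
  ext i
  have h := congr_arg (coeff · (j + 1)) (congrFun (charmatrix_mulVec_adjugate_mulVec A b) i)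
  simp only [charmatrix_mulVec, Pi.sub_apply, Pi.smul_apply, coeff_sub, smul_eq_mul, coeff_X_mul,
    coeff_mulVec_map_C, Function.comp_apply, coeff_mul_C] at h
  unfold adjugateCharmatrixCoeff
  simp only [Pi.sub_apply, Pi.smul_apply, smul_eq_mul]
  linear_combination -h

theorem mulVec_adjugateCharmatrixCoeff_zero :
    A *ᵥ adjugateCharmatrixCoeff A b 0 = -(A.charpoly.coeff 0 • b) := by
  ext i
  have h := congr_arg (coeff · 0) (congrFun (charmatrix_mulVec_adjugate_mulVec A b) i)
  simp only [charmatrix_mulVec, Pi.sub_apply, Pi.smul_apply, coeff_sub, smul_eq_mul,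
    coeff_X_mul_zero, coeff_mulVec_map_C, Function.comp_apply, coeff_mul_C] at h
  unfold adjugateCharmatrixCoeff
  simp only [Pi.neg_apply, Pi.smul_apply, smul_eq_mul]
  linear_combination -h

theorem coeff_charpoly_of_card_le [Nontrivial R] (M : Matrix ι ι R) {j : ℕ}
    (hj : Fintype.card ι ≤ j) :
    M.charpoly.coeff j = if j = Fintype.card ι then 1 else 0 := by
  split_ifs with h
  · subst h; simpa using (charpoly_monic M).coeff_natDegree
  · exact coeff_eq_zero_of_natDegree_lt (by rw [charpoly_natDegree_eq_dim]; omega)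

theorem adjugateCharmatrixCoeff_eq_zero [IsDomain R] {j : ℕ} (hj : Fintype.card ι ≤ j) :
    adjugateCharmatrixCoeff A b j = 0 := by
  ext i
  -- `charpoly (A - b eᵢᵀ)` and `charpoly A` are both monic of degree `card ι`.
  have h := coeff_charpoly_sub_vecMulVec A b (Pi.single i 1) j
  rwa [dotProduct_single, mul_one, coeff_charpoly_of_card_le _ hj,
    coeff_charpoly_of_card_le _ hj, left_eq_add] at h

theorem adjugateCharmatrixCoeff_card_sub_one [IsDomain R] :
    adjugateCharmatrixCoeff A b (Fintype.card ι - 1) = b := by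
  rcases (Fintype.card ι).eq_zero_or_pos with h | h
  · have : IsEmpty ι := Fintype.card_eq_zero_iff.mp h
    exact Subsingleton.elim _ _
  · have h' := mulVec_adjugateCharmatrixCoeff_succ A b (Fintype.card ι - 1)
    rwa [Nat.sub_add_cancel h, adjugateCharmatrixCoeff_eq_zero A b le_rfl, mulVec_zero,
      coeff_charpoly_of_card_le _ le_rfl, if_pos rfl, one_smul, eq_comm, sub_eq_zero] at h'

end adjugateCharmatrixCoeff

section controllability

variable {n : ℕ} {K : Type*} [Field K] (A : Matrix (Fin n) (Fin n) K) (b : Fin n → K)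

noncomputable def adjugateCharmatrixCoeffMatrix : Matrix (Fin n) (Fin n) K :=
  of fun j : Fin n => adjugateCharmatrixCoeff A b j

@[simp]
theorem adjugateCharmatrixCoeffMatrix_apply (j : Fin n) :
    adjugateCharmatrixCoeffMatrix A b j = adjugateCharmatrixCoeff A b j :=
  rfl

theorem coeff_charpoly_sub_vecMulVec_eq_add_mulVec (k : Fin n → K) :
    (fun j : Fin n => (A - vecMulVec b k).charpoly.coeff j) =
      (fun j : Fin n => A.charpoly.coeff j) + adjugateCharmatrixCoeffMatrix A b *ᵥ k := by
  ext j
  exact coeff_charpoly_sub_vecMulVec A b k j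

theorem mem_span_adjugateCharmatrixCoeffMatrix :
    b ∈ Submodule.span K (Set.range (adjugateCharmatrixCoeffMatrix A b)) := by
  rcases n with _ | n
  · exact Subsingleton.elim b 0 ▸ Submodule.zero_mem _
  · refine Submodule.subset_span ⟨Fin.last n, ?_⟩
    simpa using adjugateCharmatrixCoeff_card_sub_one A b

theorem mulVec_mem_span_adjugateCharmatrixCoeffMatrix {v : Fin n → K}
    (hv : v ∈ Submodule.span K (Set.range (adjugateCharmatrixCoeffMatrix A b))) :
    A *ᵥ v ∈ Submodule.span K (Set.range (adjugateCharmatrixCoeffMatrix A b)) := by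
  set W := Submodule.span K (Set.range (adjugateCharmatrixCoeffMatrix A b))
  have hb : b ∈ W := mem_span_adjugateCharmatrixCoeffMatrix A b
  suffices W ≤ W.comap A.mulVecLin from this hv
  refine Submodule.span_le.mpr ?_
  rintro _ ⟨⟨_ | j, hj⟩, rfl⟩
  · simpa [mulVec_adjugateCharmatrixCoeff_zero] using W.smul_mem (-A.charpoly.coeff 0) hb
  · have hw : adjugateCharmatrixCoeff A b j ∈ W :=
      Submodule.subset_span ⟨⟨j, by omega⟩, rfl⟩
    simpa [mulVec_adjugateCharmatrixCoeff_succ] using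
      W.sub_mem hw (W.smul_mem (A.charpoly.coeff (j + 1)) hb)

theorem pow_mulVec_mem_span_adjugateCharmatrixCoeffMatrix (m : ℕ) :
    A ^ m *ᵥ b ∈ Submodule.span K (Set.range (adjugateCharmatrixCoeffMatrix A b)) := by
  induction m with
  | zero => simpa using mem_span_adjugateCharmatrixCoeffMatrix A b
  | succ m ih =>
    simpa [pow_succ', ← mulVec_mulVec] using mulVec_mem_span_adjugateCharmatrixCoeffMatrix A b ih

theorem isUnit_adjugateCharmatrixCoeffMatrix
    (h : Submodule.span K (Set.range fun j : Fin n => A ^ (j : ℕ) *ᵥ b) = ⊤) :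
    IsUnit (adjugateCharmatrixCoeffMatrix A b) := by
  refine vecMul_surjective_iff_isUnit.mp (LinearMap.range_eq_top.mp ?_ :
    Function.Surjective (adjugateCharmatrixCoeffMatrix A b).vecMulLinear)
  rw [range_vecMulLinear, eq_top_iff, ← h, Submodule.span_le]
  rintro _ ⟨j, rfl⟩
  exact pow_mulVec_mem_span_adjugateCharmatrixCoeffMatrix A b j

theorem span_range_pow_mulVec_eq_top_of_rank_eq
    (h : (of fun i j : Fin n => (A ^ (j : ℕ) *ᵥ b) i).rank = n) :
    Submodule.span K (Set.range fun j : Fin n => A ^ (j : ℕ) *ᵥ b) = ⊤ := by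
  apply Submodule.eq_top_of_finrank_eq
  rw [Module.finrank_fin_fun]
  exact (rank_eq_finrank_span_cols _).symm.trans h

end controllability
end Matrix

namespace Polynomial

def IsHurwitz (p : ℝ[X]) : Prop := ∀ z : ℂ, aeval z p = 0 → z.re < 0

theorem IsHurwitz.scaleRoots {p : ℝ[X]} (hp : p.IsHurwitz) {u : ℝ} (hu : 0 < u) :
    (p.scaleRoots u).IsHurwitz := by
  intro z hz
  have hu' : (u : ℂ) ≠ 0 := by exact_mod_cast hu.ne'
  have hroot : aeval (z / u) p = 0 := by
    have h := scaleRoots_eval₂_mul (p := p) (algebraMap ℝ ℂ) (z / u) u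
    rw [Complex.coe_algebraMap, mul_div_cancel₀ _ hu', ← aeval_def, hz, ← aeval_def] at h
    exact (mul_eq_zero.mp h.symm).resolve_left (pow_ne_zero _ hu')
  have := hp _ hroot
  rwa [Complex.div_ofReal_re, div_lt_iff₀ hu, zero_mul] at this

theorem IsHurwitz.comp_X_add_C {p : ℝ[X]} (hp : p.IsHurwitz) {t : ℝ} (ht : 0 ≤ t) :
    (p.comp (X + C t)).IsHurwitz := by
  intro z hz
  simp only [aeval_comp, map_add, aeval_X, aeval_C, Complex.coe_algebraMap] at hz
  have := hp _ hz
  simp only [Complex.add_re, Complex.ofReal_re] at this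
  linarith

theorem isHurwitz_X_add_C_pow {a : ℝ} (ha : 0 < a) (n : ℕ) : ((X + C a) ^ n).IsHurwitz := by
  intro z hz
  simp only [map_pow, map_add, aeval_X, aeval_C, Complex.coe_algebraMap] at hz
  have : z = -a := eq_neg_of_add_eq_zero_left (eq_zero_of_pow_eq_zero hz)
  simpa [this] using ha

section contractRoots

variable {R : Type*} [CommRing R]

/-- The roots of `p.contractRoots u` are the `u * r - (1 - u)` for the roots `r` of `p`. -/
noncomputable def contractRoots (p : R[X]) (u : R) : R[X] :=
  (p.scaleRoots u).comp (X + C (1 - u))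

theorem contractRoots_one (p : R[X]) : p.contractRoots 1 = p := by
  simp [contractRoots]

theorem contractRoots_zero {p : R[X]} (hp : p.Monic) :
    p.contractRoots 0 = (X + C 1) ^ p.natDegree := by
  simp [contractRoots, hp.leadingCoeff]

theorem Monic.contractRoots {p : R[X]} (hp : p.Monic) (u : R) : (p.contractRoots u).Monic :=
  ((monic_scaleRoots_iff u).mpr hp).comp_X_add_C _

theorem natDegree_contractRoots (p : R[X]) (u : R) :
    (p.contractRoots u).natDegree = p.natDegree := by
  rw [contractRoots, ← taylor_apply, natDegree_taylor, natDegree_scaleRoots]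

theorem coeff_contractRoots (p : R[X]) (u : R) (m : ℕ) :
    (p.contractRoots u).coeff m = ∑ i ∈ Finset.range (p.natDegree + 1),
      p.coeff i * u ^ (p.natDegree - i) * ((1 - u) ^ (i - m) * (i.choose m : R)) := by
  have hdeg : (p.scaleRoots u).natDegree < p.natDegree + 1 := by
    rw [natDegree_scaleRoots]; exact Nat.lt_succ_self _
  rw [contractRoots, comp, eval₂_eq_sum_range' C hdeg, finsetSum_coeff]
  simp only [coeff_C_mul, coeff_X_add_C_pow, coeff_scaleRoots]

theorem continuous_coeff_contractRoots [TopologicalSpace R] [IsTopologicalRing R] (p : R[X])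
    (m : ℕ) :
    Continuous fun u => (p.contractRoots u).coeff m := by
  simp only [coeff_contractRoots]
  fun_prop

theorem IsHurwitz.contractRoots {p : ℝ[X]} (hp : p.IsHurwitz) (hm : p.Monic) {u : ℝ}
    (hu₀ : 0 ≤ u) (hu₁ : u ≤ 1) :
    (p.contractRoots u).IsHurwitz := by
  rcases hu₀.eq_or_lt with rfl | hu
  · rw [contractRoots_zero hm]; exact isHurwitz_X_add_C_pow one_pos _
  · exact (hp.scaleRoots hu).comp_X_add_C (sub_nonneg.mpr hu₁)

end contractRoots

theorem Monic.eq_of_coeff_eq {R : Type*} [Semiring R] {n : ℕ} {p q : R[X]} (hp : p.Monic)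
    (hq : q.Monic) (hpn : p.natDegree = n) (hqn : q.natDegree = n)
    (h : ∀ j < n, p.coeff j = q.coeff j) : p = q := by
  ext j
  rcases lt_trichotomy j n with hj | rfl | hj
  · exact h j hj
  · rw [← hpn, hp.coeff_natDegree, hpn, ← hqn, hq.coeff_natDegree]
  · rw [coeff_eq_zero_of_natDegree_lt (hpn ▸ hj), coeff_eq_zero_of_natDegree_lt (hqn ▸ hj)]

def hurwitzLowerCoeffs (n : ℕ) : Set (Fin n → ℝ) :=
  (fun p : ℝ[X] => fun j : Fin n => p.coeff j) ''
    {p | p.Monic ∧ p.natDegree = n ∧ p.IsHurwitz}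

theorem coeff_mem_hurwitzLowerCoeffs_iff {n : ℕ} {p : ℝ[X]} (hp : p.Monic)
    (hn : p.natDegree = n) :
    (fun j : Fin n => p.coeff j) ∈ hurwitzLowerCoeffs n ↔ p.IsHurwitz := by
  refine ⟨?_, fun h => ⟨p, ⟨hp, hn, h⟩, rfl⟩⟩
  rintro ⟨q, ⟨hq, hqn, hqH⟩, hcoeff⟩
  rwa [← hq.eq_of_coeff_eq hp hqn hn fun j hj => congrFun hcoeff ⟨j, hj⟩]

theorem isPathConnected_hurwitzLowerCoeffs (n : ℕ) : IsPathConnected (hurwitzLowerCoeffs n) := by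
  refine ⟨_, ⟨(X + C 1) ^ n, ⟨(monic_X_add_C 1).pow n,
    by rw [natDegree_pow, natDegree_X_add_C, mul_one], isHurwitz_X_add_C_pow one_pos n⟩,
    rfl⟩, ?_⟩
  rintro _ ⟨p, ⟨hm, hn, hH⟩, rfl⟩
  refine JoinedIn.ofLine (f := fun u (j : Fin n) => (p.contractRoots u).coeff j)
    (continuous_pi fun j : Fin n => continuous_coeff_contractRoots p (j : ℕ)).continuousOn
    (by simp [contractRoots_zero hm, hn]) (by simp [contractRoots_one]) ?_
  rintro _ ⟨u, ⟨hu₀, hu₁⟩, rfl⟩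
  exact ⟨p.contractRoots u, ⟨hm.contractRoots u, (natDegree_contractRoots p u).trans hn,
    hH.contractRoots hm hu₀ hu₁⟩, rfl⟩

end Polynomial

theorem IsPathConnected.preimage_add_mulVec {m K : Type*} [Fintype m] [DecidableEq m]
    [CommRing K] [TopologicalSpace K] [IsTopologicalRing K] {S : Set (m → K)}
    (hS : IsPathConnected S) (a : m → K) {M : Matrix m m K} (hM : IsUnit M) :
    IsPathConnected ((fun k => a + M *ᵥ k) ⁻¹' S) := by
  have hdet := (isUnit_iff_isUnit_det M).mp hM
  rw [← Set.image_eq_preimage_of_inverse (f := fun c => M⁻¹ *ᵥ (c - a))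
    (fun k => by simp [mulVec_mulVec, mul_nonsing_inv _ hdet])
    (fun c => by simp [mulVec_mulVec, nonsing_inv_mul _ hdet])]
  exact hS.image (by fun_prop)

theorem hurwitz_state_feedback_gains_pathConnected_general (n : ℕ)
    (A : Matrix (Fin n) (Fin n) ℝ) (b : Fin n → ℝ)
    (hctrb : (Matrix.of fun i j : Fin n => ((A ^ (j : ℕ)) *ᵥ b) i).rank = n) :
    IsPathConnected {k : Fin n → ℝ |
      ∀ z : ℂ, aeval z (A - vecMulVec b k).charpoly = 0 → z.re < 0} := by
  have hW := isUnit_adjugateCharmatrixCoeffMatrix A b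
    (span_range_pow_mulVec_eq_top_of_rank_eq A b hctrb)
  convert (isPathConnected_hurwitzLowerCoeffs n).preimage_add_mulVec
    (fun j : Fin n => A.charpoly.coeff j) hW using 1
  ext k
  rw [Set.mem_preimage, ← coeff_charpoly_sub_vecMulVec_eq_add_mulVec,
    coeff_mem_hurwitzLowerCoeffs_iff (charpoly_monic _) (by simp)]
  rfl

/-- For a controllable pair `(A, b)`, the set of Hurwitz stabilizing state
feedback gains `H_x = {k ∈ ℝⁿ : all eigenvalues of A − b kᵀ have negative real part}`
is path-connected. -/
theorem hurwitz_state_feedback_gains_pathConnected (n : ℕ) (hn : 1 ≤ n)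
    (A : Matrix (Fin n) (Fin n) ℝ) (b : Fin n → ℝ)
    (hctrb : (Matrix.of fun i j : Fin n => ((A ^ (j : ℕ)) *ᵥ b) i).rank = n) :
    IsPathConnected {k : Fin n → ℝ |
      ∀ z : ℂ, aeval z (A - vecMulVec b k).charpoly = 0 → z.re < 0} :=
  hurwitz_state_feedback_gains_pathConnected_general n A b hctrb
end

section
/- There is a homeomorphism between the set of coefficient vectors in ℝⁿ of monic real degree-n polynomials with all roots in the open unit disk and the set of coefficient vectors of monic real degree-n polynomials with all roots in the open left half-plane, obtained by applying the bilinear transform λ ↦ (λ+1)/(λ−1) to the roots. -/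
/-!
For `p` of degree `n` with `p(1) ≠ 0`, the polynomial `(X - 1)ⁿ p((X + 1)/(X - 1))` has
degree `n`, leading coefficient `p(1)`, and its roots are the images of the roots of `p` under
the Möbius map `z ↦ (z + 1)/(z - 1)`, as one sees factor by factor. Its coefficients are linear
in those of `p`, so normalising by `p(1)` gives a continuous map on coefficient vectors, defined
wherever `p(1) ≠ 0`. Since the Möbius map is an involution away from `1`, this map is its own
inverse. Finally `|z + 1| < |z - 1| ↔ Re z < 0` shows that the Möbius map exchanges the unit
disk and the left half-plane.
-/

open Polynomial

namespace SchurHurwitz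

section MonicOfCoeffs

variable {R : Type*} [CommRing R]

noncomputable def monicOfCoeffs (n : ℕ) (a : Fin n → R) : R[X] :=
  X ^ n + ∑ i : Fin n, C (a i) * X ^ (i : ℕ)

lemma monic_monicOfCoeffs (n : ℕ) (a : Fin n → R) : (monicOfCoeffs n a).Monic :=
  monic_X_pow_add (degree_sum_fin_lt a)

lemma coeff_monicOfCoeffs (n : ℕ) (a : Fin n → R) (i : Fin n) :
    (monicOfCoeffs n a).coeff i = a i := by
  simp [monicOfCoeffs, finsetSum_coeff, coeff_X_pow, i.isLt.ne, Fin.val_inj]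

lemma monicOfCoeffs_injective (n : ℕ) : Function.Injective (monicOfCoeffs (R := R) n) :=
  fun a b h => funext fun i => by simpa [coeff_monicOfCoeffs] using congrArg (coeff · i) h

lemma natDegree_monicOfCoeffs [Nontrivial R] (n : ℕ) (a : Fin n → R) :
    (monicOfCoeffs n a).natDegree = n := by
  rw [monicOfCoeffs, natDegree_add_eq_left_of_degree_lt, natDegree_X_pow]
  simpa using degree_sum_fin_lt a

end MonicOfCoeffs

section BilinearTransformPoly

variable {R : Type*} [CommRing R]

/-- `(X - 1) ^ n * p ((X + 1) / (X - 1))`, for `p` of degree at most `n`. -/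
noncomputable def bilinearTransformPoly (n : ℕ) (p : R[X]) : R[X] :=
  ∑ k ∈ Finset.range (n + 1), C (p.coeff k) * ((X + 1) ^ k * (X - 1) ^ (n - k))

lemma map_bilinearTransformPoly {S : Type*} [CommRing S] (f : R →+* S) (n : ℕ) (p : R[X]) :
    (bilinearTransformPoly n p).map f = bilinearTransformPoly n (p.map f) := by
  simp [bilinearTransformPoly, Polynomial.map_sum]

lemma bilinearTransformPoly_C_mul (n : ℕ) (c : R) (p : R[X]) :
    bilinearTransformPoly n (C c * p) = C c * bilinearTransformPoly n p := by
  simp only [bilinearTransformPoly, coeff_C_mul, map_mul, Finset.mul_sum, mul_assoc]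

lemma bilinearTransformPoly_X_sub_C_mul (n : ℕ) (z : R) {q : R[X]} (hq : q.natDegree ≤ n) :
    bilinearTransformPoly (n + 1) ((X - C z) * q) =
      (C (1 - z) * X + C (1 + z)) * bilinearTransformPoly n q := by
  have hX : ∑ k ∈ Finset.range (n + 2),
      C ((X * q).coeff k) * ((X + 1 : R[X]) ^ k * (X - 1) ^ (n + 1 - k)) =
        (X + 1) * bilinearTransformPoly n q := by
    rw [Finset.sum_range_succ', bilinearTransformPoly, Finset.mul_sum]
    simp only [coeff_X_mul, mul_coeff_zero, coeff_X_zero, zero_mul, map_zero, add_zero,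
      Nat.add_sub_add_right]
    exact Finset.sum_congr rfl fun k _ => by ring
  have hC : ∑ k ∈ Finset.range (n + 2),
      C (q.coeff k) * ((X + 1 : R[X]) ^ k * (X - 1) ^ (n + 1 - k)) =
        (X - 1) * bilinearTransformPoly n q := by
    rw [Finset.sum_range_succ, coeff_eq_zero_of_natDegree_lt (Nat.lt_succ_of_le hq),
      bilinearTransformPoly, Finset.mul_sum]
    simp only [map_zero, zero_mul, add_zero]
    refine Finset.sum_congr rfl fun k hk => ?_
    rw [Nat.succ_sub (Nat.le_of_lt_succ (Finset.mem_range.mp hk)), pow_succ]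
    ring
  calc bilinearTransformPoly (n + 1) ((X - C z) * q)
      = ∑ k ∈ Finset.range (n + 2),
          C ((X * q).coeff k) * ((X + 1 : R[X]) ^ k * (X - 1) ^ (n + 1 - k)) -
        C z * ∑ k ∈ Finset.range (n + 2),
          C (q.coeff k) * ((X + 1 : R[X]) ^ k * (X - 1) ^ (n + 1 - k)) := by
        simp only [bilinearTransformPoly, sub_mul, coeff_sub, coeff_C_mul, map_sub, map_mul,
          Finset.sum_sub_distrib, Finset.mul_sum, mul_assoc]
    _ = (C (1 - z) * X + C (1 + z)) * bilinearTransformPoly n q := by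
        rw [hX, hC]
        simp only [map_sub, map_add, map_one]
        ring

lemma monic_X_add_one_pow_mul_X_sub_one_pow (k m : ℕ) :
    ((X + 1 : R[X]) ^ k * (X - 1) ^ m).Monic := by
  simpa using ((monic_X_add_C (1 : R)).pow k).mul ((monic_X_sub_C (1 : R)).pow m)

variable [Nontrivial R]

lemma natDegree_X_add_one_pow_mul_X_sub_one_pow (k m : ℕ) :
    ((X + 1 : R[X]) ^ k * (X - 1) ^ m).natDegree = k + m := by
  have h1 : (X + 1 : R[X]).Monic := by simpa using monic_X_add_C (1 : R)
  have h2 : (X - 1 : R[X]).Monic := by simpa using monic_X_sub_C (1 : R)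
  have d1 : (X + 1 : R[X]).natDegree = 1 := by simpa using natDegree_X_add_C (1 : R)
  have d2 : (X - 1 : R[X]).natDegree = 1 := by simpa using natDegree_X_sub_C (1 : R)
  rw [(h1.pow k).natDegree_mul (h2.pow m), h1.natDegree_pow, h2.natDegree_pow, d1, d2,
    mul_one, mul_one]

lemma natDegree_bilinearTransformPoly_le (n : ℕ) (p : R[X]) :
    (bilinearTransformPoly n p).natDegree ≤ n := by
  refine natDegree_sum_le_of_forall_le _ _ fun k hk => (natDegree_C_mul_le _ _).trans ?_
  rw [natDegree_X_add_one_pow_mul_X_sub_one_pow]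
  have := Finset.mem_range.mp hk
  omega

lemma coeff_bilinearTransformPoly_self (n : ℕ) {p : R[X]} (hp : p.natDegree ≤ n) :
    (bilinearTransformPoly n p).coeff n = p.eval 1 := by
  rw [bilinearTransformPoly, finsetSum_coeff, eval_eq_sum_range' (Nat.lt_succ_of_le hp)]
  refine Finset.sum_congr rfl fun k hk => ?_
  have hkn : k + (n - k) = n := Nat.add_sub_of_le (Nat.le_of_lt_succ (Finset.mem_range.mp hk))
  have h := (monic_X_add_one_pow_mul_X_sub_one_pow (R := R) k (n - k)).coeff_natDegree
  rw [natDegree_X_add_one_pow_mul_X_sub_one_pow, hkn] at h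
  rw [coeff_C_mul, h, one_pow, mul_one]

end BilinearTransformPoly

section BilinearTransform

variable {K : Type*} [Field K]

def bilinearTransform (z : K) : K := (z + 1) / (z - 1)

lemma bilinearTransform_ne_one [NeZero (2 : K)] (z : K) : bilinearTransform z ≠ 1 := by
  by_cases hz : z = 1
  · simp [bilinearTransform, hz]
  · rw [bilinearTransform, Ne, div_eq_one_iff_eq (sub_ne_zero.mpr hz)]
    intro h
    exact two_ne_zero (by linear_combination h : (2 : K) = 0)

lemma bilinearTransform_bilinearTransform {z : K} (hz : z ≠ 1) (hbz : bilinearTransform z ≠ 1) :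
    bilinearTransform (bilinearTransform z) = z := by
  have hz' : z - 1 ≠ 0 := sub_ne_zero.mpr hz
  have h2 : (2 : K) ≠ 0 := fun h2 => hbz <| by
    rw [bilinearTransform, div_eq_one_iff_eq hz']
    linear_combination h2
  rw [bilinearTransform, bilinearTransform, div_add_one hz', div_sub_one hz',
    div_div_div_cancel_right₀ hz', div_eq_iff (by ring_nf; exact h2)]
  ring

lemma bilinearTransformPoly_multiset_prod_X_sub_C (s : Multiset K) (hs : ∀ z ∈ s, z ≠ 1) :
    bilinearTransformPoly (Multiset.card s) (s.map (X - C ·)).prod =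
      C (s.map (1 - ·)).prod * ((s.map bilinearTransform).map (X - C ·)).prod := by
  induction s using Multiset.induction with
  | empty => simp [bilinearTransformPoly]
  | cons z s ih =>
    have hz : z - 1 ≠ 0 := sub_ne_zero.mpr (hs z (Multiset.mem_cons_self z s))
    have hfactor : (C (1 - z) * X + C (1 + z) : K[X]) =
        C (1 - z) * (X - C (bilinearTransform z)) := by
      have h : (1 - z) * bilinearTransform z = -(1 + z) := by
        rw [bilinearTransform, mul_div_assoc', div_eq_iff hz]
        ring
      rw [mul_sub, ← C_mul, h, map_neg, sub_neg_eq_add]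
    simp only [Multiset.map_cons, Multiset.prod_cons, Multiset.card_cons]
    rw [bilinearTransformPoly_X_sub_C_mul _ _ (natDegree_multiset_prod_X_sub_C_eq_card s).le,
      ih fun w hw => hs w (Multiset.mem_cons_of_mem hw), hfactor, C_mul]
    ring

lemma roots_bilinearTransformPoly [IsAlgClosed K] {n : ℕ} {p : K[X]} (hp : p.natDegree = n)
    (h1 : p.eval 1 ≠ 0) : (bilinearTransformPoly n p).roots = p.roots.map bilinearTransform := by
  have hp0 : p ≠ 0 := fun h => h1 (by simp [h])
  have hroots : ∀ z ∈ p.roots, z ≠ 1 := fun z hz h => h1 (h ▸ (mem_roots hp0).mp hz)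
  have hprod : (p.roots.map (1 - ·)).prod ≠ 0 := Multiset.prod_ne_zero fun h => by
    obtain ⟨z, hz, hz1⟩ := Multiset.mem_map.mp h
    exact hroots z hz (by linear_combination -hz1)
  calc (bilinearTransformPoly n p).roots
      = (C p.leadingCoeff * bilinearTransformPoly (Multiset.card p.roots)
          (p.roots.map (X - C ·)).prod).roots := by
        rw [← bilinearTransformPoly_C_mul, ← (IsAlgClosed.splits p).eq_prod_roots,
          IsAlgClosed.card_roots_eq_natDegree, hp]
    _ = p.roots.map bilinearTransform := by
        rw [bilinearTransformPoly_multiset_prod_X_sub_C _ hroots, ← mul_assoc, ← C_mul,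
          roots_C_mul _ (mul_ne_zero (leadingCoeff_ne_zero.mpr hp0) hprod),
          roots_multiset_prod_X_sub_C]

end BilinearTransform

section BilinearTransformCoeffs

variable {K : Type*} [Field K]

noncomputable def bilinearTransformCoeffs (n : ℕ) (a : Fin n → K) : Fin n → K :=
  fun i => (bilinearTransformPoly n (monicOfCoeffs n a)).coeff i / (monicOfCoeffs n a).eval 1

lemma C_mul_monicOfCoeffs_bilinearTransformCoeffs {n : ℕ} {a : Fin n → K}
    (h : (monicOfCoeffs n a).eval 1 ≠ 0) :
    C ((monicOfCoeffs n a).eval 1) * monicOfCoeffs n (bilinearTransformCoeffs n a) =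
      bilinearTransformPoly n (monicOfCoeffs n a) := by
  have hdeg := (natDegree_monicOfCoeffs n a).le
  ext k
  rw [coeff_C_mul]
  rcases lt_trichotomy k n with hk | rfl | hk
  · rw [coeff_monicOfCoeffs n _ ⟨k, hk⟩, bilinearTransformCoeffs, mul_div_cancel₀ _ h]
  · have hmonic := (monic_monicOfCoeffs k (bilinearTransformCoeffs k a)).coeff_natDegree
    rw [natDegree_monicOfCoeffs (R := K)] at hmonic
    rw [hmonic, mul_one, coeff_bilinearTransformPoly_self _ hdeg]
  · rw [coeff_eq_zero_of_natDegree_lt (by rwa [natDegree_monicOfCoeffs]), mul_zero,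
      coeff_eq_zero_of_natDegree_lt ((natDegree_bilinearTransformPoly_le n _).trans_lt hk)]

lemma roots_map_monicOfCoeffs_bilinearTransformCoeffs {L : Type*} [Field L] [IsAlgClosed L]
    [Algebra K L] {n : ℕ} {a : Fin n → K} (h : (monicOfCoeffs n a).eval 1 ≠ 0) :
    ((monicOfCoeffs n (bilinearTransformCoeffs n a)).map (algebraMap K L)).roots =
      ((monicOfCoeffs n a).map (algebraMap K L)).roots.map bilinearTransform := by
  have h' : algebraMap K L ((monicOfCoeffs n a).eval 1) ≠ 0 := by simpa using h
  rw [← roots_bilinearTransformPoly (by rw [natDegree_map, natDegree_monicOfCoeffs])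
      (by rwa [eval_one_map]), ← map_bilinearTransformPoly,
    ← C_mul_monicOfCoeffs_bilinearTransformCoeffs h, Polynomial.map_mul, map_C, roots_C_mul _ h']

lemma ne_one_of_mem_roots_map {L : Type*} [Field L] [Algebra K L] {p : K[X]} (h : p.eval 1 ≠ 0)
    {z : L} (hz : z ∈ (p.map (algebraMap K L)).roots) : z ≠ 1 := by
  rintro rfl
  have := (mem_roots'.mp hz).2
  rw [IsRoot, eval_one_map, map_eq_zero] at this
  exact h this

lemma bilinearTransformCoeffs_bilinearTransformCoeffs {n : ℕ} {a : Fin n → K}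
    (h : (monicOfCoeffs n a).eval 1 ≠ 0)
    (h' : (monicOfCoeffs n (bilinearTransformCoeffs n a)).eval 1 ≠ 0) :
    bilinearTransformCoeffs n (bilinearTransformCoeffs n a) = a := by
  set L := AlgebraicClosure K
  have hfix : ∀ z ∈ ((monicOfCoeffs n a).map (algebraMap K L)).roots,
      (bilinearTransform ∘ bilinearTransform) z = z := fun z hz =>
    bilinearTransform_bilinearTransform (ne_one_of_mem_roots_map h hz) <|
      ne_one_of_mem_roots_map h' <| by
        rw [roots_map_monicOfCoeffs_bilinearTransformCoeffs h]
        exact Multiset.mem_map_of_mem _ hz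
  have hroots := roots_map_monicOfCoeffs_bilinearTransformCoeffs (L := L) h'
  rw [roots_map_monicOfCoeffs_bilinearTransformCoeffs h, Multiset.map_map,
    Multiset.map_congr rfl hfix, Multiset.map_id'] at hroots
  refine monicOfCoeffs_injective n (map_injective _ (algebraMap K L).injective ?_)
  rw [(IsAlgClosed.splits _).eq_prod_roots_of_monic ((monic_monicOfCoeffs n _).map _), hroots,
    ← (IsAlgClosed.splits _).eq_prod_roots_of_monic ((monic_monicOfCoeffs n _).map _)]

end BilinearTransformCoeffs

section Continuity

variable {R : Type*} [CommRing R] [TopologicalSpace R] [IsTopologicalRing R]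

lemma continuous_coeff_monicOfCoeffs (n k : ℕ) :
    Continuous fun a : Fin n → R => (monicOfCoeffs n a).coeff k := by
  simp only [monicOfCoeffs, coeff_add, finsetSum_coeff, coeff_C_mul]
  fun_prop

lemma continuous_eval_monicOfCoeffs (n : ℕ) (x : R) :
    Continuous fun a : Fin n → R => (monicOfCoeffs n a).eval x := by
  simp only [monicOfCoeffs, eval_add, eval_finsetSum, eval_mul, eval_C, eval_pow, eval_X]
  fun_prop

lemma continuous_coeff_bilinearTransformPoly_monicOfCoeffs (n k : ℕ) :
    Continuous fun a : Fin n → R => (bilinearTransformPoly n (monicOfCoeffs n a)).coeff k := by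
  simp only [bilinearTransformPoly, finsetSum_coeff, coeff_C_mul]
  exact continuous_finsetSum _ fun k _ => (continuous_coeff_monicOfCoeffs n k).mul continuous_const

lemma continuousOn_bilinearTransformCoeffs {K : Type*} [Field K] [TopologicalSpace K]
    [IsTopologicalDivisionRing K] (n : ℕ) :
    ContinuousOn (bilinearTransformCoeffs (K := K) n) {a | (monicOfCoeffs n a).eval 1 ≠ 0} :=
  continuousOn_pi.mpr fun i =>
    (continuous_coeff_bilinearTransformPoly_monicOfCoeffs n i).continuousOn.div
      (continuous_eval_monicOfCoeffs n 1).continuousOn fun _ ha => ha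

end Continuity

section RootsIn

variable {K L : Type*} [Field K] [Field L] [Algebra K L]

def coeffsWithRootsIn (n : ℕ) (s : Set L) : Set (Fin n → K) :=
  {a | ∀ z : L, aeval z (monicOfCoeffs n a) = 0 → z ∈ s}

lemma eval_one_ne_zero_of_mem_coeffsWithRootsIn {n : ℕ} {s : Set L} (hs : 1 ∉ s)
    {a : Fin n → K} (ha : a ∈ coeffsWithRootsIn n s) : (monicOfCoeffs n a).eval 1 ≠ 0 :=
  fun h => hs <| ha 1 <| by
    rw [← map_one (algebraMap K L), aeval_algebraMap_apply_eq_algebraMap_eval, h, map_zero]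

lemma bilinearTransformCoeffs_mem_coeffsWithRootsIn [IsAlgClosed L] {n : ℕ} {s t : Set L}
    (hst : Set.MapsTo bilinearTransform s t) (hs : 1 ∉ s) {a : Fin n → K}
    (ha : a ∈ coeffsWithRootsIn n s) : bilinearTransformCoeffs n a ∈ coeffsWithRootsIn n t := by
  intro z hz
  rw [aeval_def, ← mem_roots_map_of_injective (algebraMap K L).injective
    (monic_monicOfCoeffs n _).ne_zero, roots_map_monicOfCoeffs_bilinearTransformCoeffs
    (eval_one_ne_zero_of_mem_coeffsWithRootsIn hs ha)] at hz
  obtain ⟨w, hw, rfl⟩ := Multiset.mem_map.mp hz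
  refine hst (ha w ?_)
  rwa [aeval_def, ← mem_roots_map_of_injective (algebraMap K L).injective
    (monic_monicOfCoeffs n _).ne_zero]

variable [TopologicalSpace K] [IsTopologicalDivisionRing K] [IsAlgClosed L]

noncomputable def coeffsWithRootsInHomeomorph (n : ℕ) {s t : Set L}
    (hst : Set.MapsTo bilinearTransform s t) (hts : Set.MapsTo bilinearTransform t s)
    (hs : 1 ∉ s) (ht : 1 ∉ t) :
    coeffsWithRootsIn (K := K) n s ≃ₜ coeffsWithRootsIn (K := K) n t where
  toFun a :=
    ⟨bilinearTransformCoeffs n a, bilinearTransformCoeffs_mem_coeffsWithRootsIn hst hs a.2⟩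
  invFun a :=
    ⟨bilinearTransformCoeffs n a, bilinearTransformCoeffs_mem_coeffsWithRootsIn hts ht a.2⟩
  left_inv a := Subtype.ext <| bilinearTransformCoeffs_bilinearTransformCoeffs
    (eval_one_ne_zero_of_mem_coeffsWithRootsIn hs a.2) (eval_one_ne_zero_of_mem_coeffsWithRootsIn
      ht (bilinearTransformCoeffs_mem_coeffsWithRootsIn hst hs a.2))
  right_inv a := Subtype.ext <| bilinearTransformCoeffs_bilinearTransformCoeffs
    (eval_one_ne_zero_of_mem_coeffsWithRootsIn ht a.2) (eval_one_ne_zero_of_mem_coeffsWithRootsIn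
      hs (bilinearTransformCoeffs_mem_coeffsWithRootsIn hts ht a.2))
  continuous_toFun := ((continuousOn_bilinearTransformCoeffs n).comp_continuous
    continuous_subtype_val fun a => eval_one_ne_zero_of_mem_coeffsWithRootsIn hs a.2).subtype_mk _
  continuous_invFun := ((continuousOn_bilinearTransformCoeffs n).comp_continuous
    continuous_subtype_val fun a => eval_one_ne_zero_of_mem_coeffsWithRootsIn ht a.2).subtype_mk _

end RootsIn

lemma norm_bilinearTransform_lt_one_iff {z : ℂ} (hz : z ≠ 1) :
    ‖bilinearTransform z‖ < 1 ↔ z.re < 0 := by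
  rw [bilinearTransform, norm_div, div_lt_one (norm_pos_iff.mpr (sub_ne_zero.mpr hz)),
    ← sq_lt_sq₀ (norm_nonneg _) (norm_nonneg _), Complex.sq_norm, Complex.sq_norm,
    Complex.normSq_apply, Complex.normSq_apply]
  simp only [Complex.add_re, Complex.sub_re, Complex.add_im, Complex.sub_im, Complex.one_re,
    Complex.one_im]
  constructor <;> intro h <;> nlinarith

lemma mapsTo_bilinearTransform_unitDisk :
    Set.MapsTo bilinearTransform {z : ℂ | ‖z‖ < 1} {z : ℂ | z.re < 0} := fun z hz => by
  have hz1 : z ≠ 1 := by rintro rfl; simp at hz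
  show (bilinearTransform z).re < 0
  rwa [← norm_bilinearTransform_lt_one_iff (bilinearTransform_ne_one z),
    bilinearTransform_bilinearTransform hz1 (bilinearTransform_ne_one z)]

lemma mapsTo_bilinearTransform_leftHalfPlane :
    Set.MapsTo bilinearTransform {z : ℂ | z.re < 0} {z : ℂ | ‖z‖ < 1} := fun z hz =>
  (norm_bilinearTransform_lt_one_iff (by rintro rfl; norm_num at hz)).mpr hz

end SchurHurwitz

/-- The set of coefficient vectors of monic real degree-`n` polynomials
with all roots in the open unit disk is homeomorphic to the set of those with all
roots in the open left half-plane, via the bilinear transform `λ ↦ (λ+1)/(λ−1)`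
applied to the roots. -/
theorem schur_hurwitz_coeff_homeomorph (n : ℕ) :
    ∃ h : {a : Fin n → ℝ |
        ∀ z : ℂ, aeval z (X ^ n + ∑ i : Fin n, C (a i) * X ^ (i : ℕ) : ℝ[X]) = 0 →
          ‖z‖ < 1} ≃ₜ
      {a : Fin n → ℝ |
        ∀ z : ℂ, aeval z (X ^ n + ∑ i : Fin n, C (a i) * X ^ (i : ℕ) : ℝ[X]) = 0 →
          z.re < 0},
      ∀ a, ((X ^ n + ∑ i : Fin n, C ((h a : Fin n → ℝ) i) * X ^ (i : ℕ) : ℝ[X]).map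
            (algebraMap ℝ ℂ)).roots =
        Multiset.map (fun z : ℂ => (z + 1) / (z - 1))
          ((X ^ n + ∑ i : Fin n, C ((a : Fin n → ℝ) i) * X ^ (i : ℕ) : ℝ[X]).map
            (algebraMap ℝ ℂ)).roots := by
  open SchurHurwitz in
  have hdisk : (1 : ℂ) ∉ {z : ℂ | ‖z‖ < 1} := by simp
  have hhalf : (1 : ℂ) ∉ {z : ℂ | z.re < 0} := by simp
  exact ⟨coeffsWithRootsInHomeomorph n mapsTo_bilinearTransform_unitDisk
      mapsTo_bilinearTransform_leftHalfPlane hdisk hhalf,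
    fun a => roots_map_monicOfCoeffs_bilinearTransformCoeffs
      (eval_one_ne_zero_of_mem_coeffsWithRootsIn hdisk a.2)⟩
end

section
/- Let p(λ) ∈ ℝ[λ] be monic of degree n with a root λ₀ of multiplicity m ≥ 1, write p(λ) = (λ−λ₀)ᵐ h(λ) with h(λ₀) ≠ 0, and let r(λ) ∈ ℝ[λ] with r(λ₀) ≠ 0. Then for t → 0, the polynomial p(λ) − t·r(λ) has exactly m roots converging to λ₀, and these roots admit the expansion λⱼ(t) = λ₀ + (t·r(λ₀)/h(λ₀))^{1/m} ωⱼ + o(|t|^{1/m}), where ω₁,…,ωₘ are the m-th roots of unity. -/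
/-!
Put `a = r(λ₀)/h(λ₀)` and let `G` be the analytic branch of `(r/(a h))^(1/m)` near `λ₀` with
`G(λ₀) = 1`. If `b^m = t a`, then near `λ₀` we have `p - t r = h ((λ - λ₀)^m - (b G(λ))^m)`, so the
roots of `p - t r` close to `λ₀` are the solutions of `λ = λ₀ + b ωⱼ G(λ)`. Since `G` is Lipschitz
near `λ₀`, for small `b` each of these maps contracts a fixed closed ball around `λ₀`; its unique
fixed point `Z(b ωⱼ)` satisfies `Z(β) = λ₀ + β + O(β²)`. The `m` fixed points are distinct, and
they are simple roots because `1 - b ωⱼ G'` does not vanish there.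
-/

open Polynomial Asymptotics Real Metric Filter Topology Set Function

theorem LipschitzOnWith.existsUnique_isFixedPt {α : Type*} [MetricSpace α] {s : Set α}
    {K : NNReal} {f : α → α} (hf : LipschitzOnWith K f s) (hK : K < 1) (hs : IsComplete s)
    (hne : s.Nonempty) (hmaps : MapsTo f s s) : ∃! x ∈ s, IsFixedPt f x := by
  have : CompleteSpace s := hs.completeSpace_coe
  have : Nonempty s := hne.to_subtype
  have hc : ContractingWith K (hmaps.restrict f s s) := ⟨hK, hf.mapsToRestrict hmaps⟩
  refine ⟨(ContractingWith.fixedPoint _ hc : s), ⟨Subtype.coe_prop _, congrArg Subtype.val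
    (ContractingWith.fixedPoint_isFixedPt hc)⟩, fun y ⟨hy, hfy⟩ => ?_⟩
  exact congrArg Subtype.val (hc.fixedPoint_unique (x := ⟨y, hy⟩) (Subtype.ext hfy))

theorem norm_le_of_lipschitzOnWith_closedBall {E : Type*} [SeminormedAddCommGroup E] {G : E → E}
    {x₀ : E} {K : NNReal} {δ : ℝ}
    (hG : LipschitzOnWith K G (closedBall x₀ δ)) {z : E} (hz : z ∈ closedBall x₀ δ) :
    ‖G z‖ ≤ ‖G x₀‖ + K * δ := by
  have := hG.dist_le_mul z hz x₀ (mem_closedBall_self (dist_nonneg.trans hz))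
  rw [dist_eq_norm] at this
  calc ‖G z‖ ≤ ‖G x₀‖ + ‖G z - G x₀‖ := norm_le_norm_add_norm_sub' _ _
    _ ≤ ‖G x₀‖ + K * δ := by
      gcongr
      exact this.trans (mul_le_mul_of_nonneg_left (mem_closedBall.1 hz) K.2)

section FixedPoints

variable {𝕜 E : Type*} [NontriviallyNormedField 𝕜] [NormedAddCommGroup E] [NormedSpace 𝕜 E]
  {G : E → E} {x₀ : E} {K : NNReal}

theorem existsUnique_add_smul_eq [CompleteSpace E] {δ : ℝ}
    (hG : LipschitzOnWith K G (closedBall x₀ δ)) (hδ : 0 ≤ δ) {b : 𝕜} (hbK : ‖b‖ * K < 1)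
    (hbδ : ‖b‖ * (‖G x₀‖ + K * δ) ≤ δ) :
    ∃! z ∈ closedBall x₀ δ, x₀ + b • G z = z := by
  refine LipschitzOnWith.existsUnique_isFixedPt (K := ‖b‖₊ * K) ?_ ?_
    isClosed_closedBall.isComplete ⟨x₀, mem_closedBall_self hδ⟩ fun z hz => ?_
  · refine LipschitzOnWith.of_dist_le_mul fun z hz w hw => ?_
    rw [dist_add_left, dist_smul₀, NNReal.coe_mul, coe_nnnorm, mul_assoc]
    exact mul_le_mul_of_nonneg_left (hG.dist_le_mul z hz w hw) (norm_nonneg b)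
  · rwa [← NNReal.coe_lt_coe, NNReal.coe_mul, coe_nnnorm]
  · rw [mem_closedBall, dist_eq_norm, add_sub_cancel_left, norm_smul]
    exact (mul_le_mul_of_nonneg_left (norm_le_of_lipschitzOnWith_closedBall hG hz)
      (norm_nonneg b)).trans hbδ

theorem exists_fixedPoints_add_smul [CompleteSpace E] {s : Set E} (hs : s ∈ 𝓝 x₀)
    (hG : LipschitzOnWith K G s) :
    ∃ δ > 0, closedBall x₀ δ ⊆ s ∧ ∃ u > (0 : ℝ), ∃ Z : 𝕜 → E,
      (fun b => Z b - x₀ - b • G x₀) =o[𝓝 0] (fun b => b) ∧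
      ∀ b : 𝕜, ‖b‖ < u → ‖b‖ * K < 1 ∧ Z b ∈ ball x₀ δ ∧ x₀ + b • G (Z b) = Z b ∧
        ∀ z ∈ closedBall x₀ δ, x₀ + b • G z = z → z = Z b := by
  obtain ⟨δ, hδ, hδs⟩ := nhds_basis_closedBall.mem_iff.1 hs
  set M := ‖G x₀‖ + K * δ
  have hLip := hG.mono hδs
  set u := min (δ / (M + 1)) (1 / (K + 1))
  have hu : 0 < u := by positivity
  have hbK {b : 𝕜} (hb : ‖b‖ < u) : ‖b‖ * K < 1 := by
    have := (lt_of_lt_of_le hb (min_le_right _ _))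
    rw [lt_div_iff₀ (by positivity)] at this
    nlinarith [norm_nonneg b]
  have hbM {b : 𝕜} (hb : ‖b‖ < u) : ‖b‖ * M < δ := by
    have := (lt_of_lt_of_le hb (min_le_left _ _))
    rw [lt_div_iff₀ (by positivity)] at this
    nlinarith [norm_nonneg b]
  have hfix {b : 𝕜} (hb : ‖b‖ < u) : ∃! z ∈ closedBall x₀ δ, x₀ + b • G z = z :=
    existsUnique_add_smul_eq hLip hδ.le (hbK hb) (hbM hb).le
  choose! Z hZ using fun b (hb : ‖b‖ < u) => (hfix hb).exists
  have hZdist {b : 𝕜} (hb : ‖b‖ < u) : ‖Z b - x₀‖ ≤ ‖b‖ * M := by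
    rw [← (hZ b hb).2, add_sub_cancel_left, norm_smul]
    exact mul_le_mul_of_nonneg_left
      (norm_le_of_lipschitzOnWith_closedBall hLip (hZ b hb).1) (norm_nonneg b)
  refine ⟨δ, hδ, hδs, u, hu, Z, ?_, fun b hb => ⟨hbK hb, ?_, (hZ b hb).2,
    fun z hz hfz => (hfix hb).unique ⟨hz, hfz⟩ (hZ b hb)⟩⟩
  · refine IsBigO.trans_isLittleO (g := fun b : 𝕜 => b ^ 2) ?_ (isLittleO_pow_id one_lt_two)
    refine IsBigO.of_bound (K * M) ?_
    filter_upwards [ball_mem_nhds (0 : 𝕜) hu] with b hb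
    rw [mem_ball_zero_iff] at hb
    have hLipZ := hLip.dist_le_mul (Z b) (hZ b hb).1 x₀ (mem_closedBall_self hδ.le)
    rw [dist_eq_norm, dist_eq_norm] at hLipZ
    calc ‖Z b - x₀ - b • G x₀‖ = ‖b‖ * ‖G (Z b) - G x₀‖ := by
          rw [← norm_smul, smul_sub]; congr 1
          nth_rewrite 1 [← (hZ b hb).2]; abel
      _ ≤ ‖b‖ * (K * (‖b‖ * M)) := by
          gcongr
          exact hLipZ.trans (mul_le_mul_of_nonneg_left (hZdist hb) K.2)
      _ = K * M * ‖b ^ 2‖ := by rw [norm_pow]; ring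
  · rw [mem_ball, dist_eq_norm]
    exact (hZdist hb).trans_lt (hbM hb)

end FixedPoints

theorem AnalyticAt.exists_isOpen_lipschitzOnWith {𝕜 F : Type*} [RCLike 𝕜] [NormedAddCommGroup F]
    [NormedSpace 𝕜 F] [CompleteSpace F] {f : 𝕜 → F} {x : 𝕜} (hf : AnalyticAt 𝕜 f x) :
    ∃ K, ∃ s, IsOpen s ∧ x ∈ s ∧ LipschitzOnWith K f s ∧ DifferentiableOn 𝕜 f s := by
  obtain ⟨K, t, ht, hLip⟩ := (hf.contDiffAt (n := 1)).exists_lipschitzOnWith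
  refine ⟨K, interior (t ∩ {z | AnalyticAt 𝕜 f z}), isOpen_interior,
    mem_interior_iff_mem_nhds.2 (inter_mem ht hf.eventually_analyticAt),
    hLip.mono (interior_subset.trans inter_subset_left), fun z hz => ?_⟩
  exact (interior_subset hz).2.differentiableAt.differentiableWithinAt

theorem Polynomial.rootMultiplicity_eq_one {R : Type*} [CommRing R] {p : R[X]} {x : R}
    (hx : p.IsRoot x) (hx' : p.derivative.eval x ≠ 0) : p.rootMultiplicity x = 1 := by
  have hp : p ≠ 0 := by rintro rfl; simp at hx'
  have := (rootMultiplicity_pos hp).2 hx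
  have := mt (one_lt_rootMultiplicity_iff_isRoot hp).1 (fun h => hx' h.2)
  omega

theorem Polynomial.roots_filter_eq_map {R ι : Type*} [CommRing R] [IsDomain R]
    [Fintype ι] {p : R[X]} {P : R → Prop} [DecidablePred P] {f : ι → R}
    (hf : Injective f) (hP : ∀ i, P (f i)) (hroot : ∀ i, p.IsRoot (f i))
    (hsimple : ∀ i, p.derivative.eval (f i) ≠ 0) (hall : ∀ z, P z → p.IsRoot z → ∃ i, f i = z) :
    p.roots.filter P = Finset.univ.val.map f := by
  classical
  ext z
  rw [Multiset.count_filter, count_roots]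
  by_cases hz : ∃ i, f i = z
  · obtain ⟨i, rfl⟩ := hz
    rw [if_pos (hP i), rootMultiplicity_eq_one (hroot i) (hsimple i),
      Multiset.count_map_eq_count' _ _ hf, Multiset.count_eq_one_of_mem Finset.univ.nodup
        (Finset.mem_univ i)]
  · have : Multiset.count z (Finset.univ.val.map f) = 0 := by
      simpa [Multiset.count_eq_zero] using hz
    rw [this]
    split_ifs with hPz
    · exact rootMultiplicity_eq_zero fun hr => hz (hall z hPz hr)
    · rfl

theorem IsPrimitiveRoot.exists_eq_pow_mul_of_pow_eq_pow {K : Type*} [Field K] {m : ℕ} [NeZero m]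
    {ζ x y : K} (hζ : IsPrimitiveRoot ζ m) (hy : y ≠ 0) (h : x ^ m = y ^ m) :
    ∃ j : Fin m, x = ζ ^ (j : ℕ) * y := by
  obtain ⟨j, hj, hζj⟩ :=
    hζ.eq_pow_of_pow_eq_one (ξ := x / y) (by rw [div_pow, h, div_self (pow_ne_zero _ hy)])
  exact ⟨⟨j, hj⟩, by rw [hζj, div_mul_cancel₀ _ hy]⟩

section PerturbedPolynomial

variable {h R : ℂ[X]} {l₀ a t b z : ℂ} {m : ℕ} {G : ℂ → ℂ}

theorem eval_pow_mul_sub_C_mul (hGz : a * h.eval z * G z ^ m = R.eval z) (hb : b ^ m = t * a) :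
    ((X - C l₀) ^ m * h - C t * R).eval z = h.eval z * ((z - l₀) ^ m - (b * G z) ^ m) := by
  simp only [eval_sub, eval_mul, eval_pow, eval_X, eval_C]
  rw [mul_pow, hb, ← hGz]; ring

theorem isRoot_of_add_mul_eq (hGz : a * h.eval z * G z ^ m = R.eval z) (hb : b ^ m = t * a)
    (hfix : l₀ + b * G z = z) : ((X - C l₀) ^ m * h - C t * R).IsRoot z := by
  rw [IsRoot, eval_pow_mul_sub_C_mul hGz hb, ← eq_sub_of_add_eq' hfix, sub_self, mul_zero]

theorem IsPrimitiveRoot.exists_add_mul_eq_of_isRoot {ζ : ℂ} [NeZero m] (hζ : IsPrimitiveRoot ζ m)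
    (hGz : a * h.eval z * G z ^ m = R.eval z) (hb : b ^ m = t * a) (hbG : b * G z ≠ 0)
    (hroot : ((X - C l₀) ^ m * h - C t * R).IsRoot z) (hhz : h.eval z ≠ 0) :
    ∃ j : Fin m, l₀ + b * ζ ^ (j : ℕ) * G z = z := by
  rw [IsRoot, eval_pow_mul_sub_C_mul hGz hb, mul_eq_zero, sub_eq_zero] at hroot
  obtain ⟨j, hj⟩ := hζ.exists_eq_pow_mul_of_pow_eq_pow hbG (hroot.resolve_left hhz)
  exact ⟨j, by rw [mul_comm b, mul_assoc, ← hj]; ring⟩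

theorem derivative_eval_ne_zero_of_add_mul_eq {G' : ℂ} (hm : m ≠ 0)
    (hGz : ∀ᶠ w in 𝓝 z, a * h.eval w * G w ^ m = R.eval w) (hb : b ^ m = t * a)
    (hG : HasDerivAt G G' z) (hfix : l₀ + b * G z = z) (hbG : b * G z ≠ 0)
    (hhz : h.eval z ≠ 0) (hbG' : ‖b * G'‖ < 1) :
    (derivative ((X - C l₀) ^ m * h - C t * R)).eval z ≠ 0 := by
  have hψ := (h.hasDerivAt z).mul ((((hasDerivAt_id z).sub_const l₀).pow m).sub
    ((hG.const_mul b).pow m))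
  have hderiv := (Polynomial.hasDerivAt _ z).unique
    (hψ.congr_of_eventuallyEq (hGz.mono fun w hw => eval_pow_mul_sub_C_mul hw hb))
  have hsub : 1 - b * G' ≠ 0 := fun h0 => by
    rw [← sub_eq_zero.1 h0, norm_one] at hbG'; exact lt_irrefl _ hbG'
  -- With `z - l₀ = b G z`, the derivative is `m h(z) (b G z)^(m-1) (1 - b G')`.
  simp only [hderiv, Pi.sub_apply, Pi.pow_apply, id, mul_one,
    ← eq_sub_of_add_eq' hfix, sub_self, mul_zero, zero_add]
  convert mul_ne_zero (mul_ne_zero (mul_ne_zero hhz (Nat.cast_ne_zero.2 hm))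
    (pow_ne_zero (m - 1) hbG)) hsub using 1
  ring

theorem IsPrimitiveRoot.injective_of_add_mul_eq {ζ : ℂ} (hζ : IsPrimitiveRoot ζ m) (hb : b ≠ 0)
    {f : Fin m → ℂ} (hf : ∀ j : Fin m, l₀ + b * ζ ^ (j : ℕ) * G (f j) = f j)
    (hG : ∀ j, G (f j) ≠ 0) : Injective f := by
  intro i j hij
  have hζij := add_left_cancel ((hij ▸ hf i).trans (hf j).symm)
  rw [mul_left_inj' (hG j)] at hζij
  exact Fin.ext (hζ.pow_inj i.2 j.2 (mul_left_cancel₀ hb hζij))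

end PerturbedPolynomial

theorem exists_analyticAt_pow_eq_div {h R : ℂ[X]} {l₀ : ℂ} {m : ℕ} (hm : m ≠ 0)
    (hh : h.eval l₀ ≠ 0) (hR : R.eval l₀ ≠ 0) :
    ∃ G : ℂ → ℂ, AnalyticAt ℂ G l₀ ∧ G l₀ = 1 ∧
      ∀ z, h.eval z ≠ 0 → R.eval l₀ / h.eval l₀ * h.eval z * G z ^ m = R.eval z := by
  set a := R.eval l₀ / h.eval l₀
  have ha : a ≠ 0 := div_ne_zero hR hh
  have hquot : R.eval l₀ / (a * h.eval l₀) = 1 := by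
    rw [div_mul_cancel₀ _ hh, div_self hR]
  refine ⟨fun z => (R.eval z / (a * h.eval z)) ^ ((m : ℂ)⁻¹), ?_,
    by simp only [hquot, Complex.one_cpow], fun z hz => ?_⟩
  · refine AnalyticAt.cpow ?_ analyticAt_const (by rw [hquot]; exact Complex.one_mem_slitPlane)
    exact (R.differentiable.analyticAt l₀).div
      (analyticAt_const.mul (h.differentiable.analyticAt l₀)) (mul_ne_zero ha hh)
  · rw [Complex.cpow_nat_inv_pow _ hm, mul_div_cancel₀ _ (mul_ne_zero ha hz)]

theorem exists_roots_pow_mul_sub_C_mul {h R : ℂ[X]} {l₀ ζ : ℂ} {m : ℕ} [NeZero m]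
    (hζ : IsPrimitiveRoot ζ m) (hh : h.eval l₀ ≠ 0) (hR : R.eval l₀ ≠ 0) :
    ∃ δ > 0, ∃ u > (0 : ℝ), ∃ Z : ℂ → ℂ, (fun b => Z b - l₀ - b) =o[𝓝 0] (fun b => b) ∧
      ∀ t b : ℂ, b ^ m = t * (R.eval l₀ / h.eval l₀) → b ≠ 0 → ‖b‖ < u →
        ((X - C l₀) ^ m * h - C t * R).roots.filter (fun z => ‖z - l₀‖ < δ) =
          Finset.univ.val.map fun j : Fin m => Z (b * ζ ^ (j : ℕ)) := by
  obtain ⟨G, hGan, hG1, hGm⟩ := exists_analyticAt_pow_eq_div (NeZero.ne m) hh hR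
  obtain ⟨K, s, hso, hl₀s, hLip, hGd⟩ := hGan.exists_isOpen_lipschitzOnWith
  have hnhds : s ∩ {z | h.eval z ≠ 0 ∧ G z ≠ 0} ∈ 𝓝 l₀ :=
    inter_mem (hso.mem_nhds hl₀s) ((h.continuousAt.eventually_ne hh).and
      (hGan.continuousAt.eventually_ne (hG1 ▸ one_ne_zero)))
  obtain ⟨δ, hδ, hδs, u, hu, Z, hZo, hZ⟩ :=
    exists_fixedPoints_add_smul (𝕜 := ℂ) hnhds (hLip.mono inter_subset_left)
  simp only [smul_eq_mul, hG1, mul_one] at hZo hZ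
  refine ⟨δ, hδ, u, hu, Z, hZo, fun t b hb hb0 hbu => ?_⟩
  have hnorm (j : Fin m) : ‖b * ζ ^ (j : ℕ)‖ = ‖b‖ := by
    rw [norm_mul, norm_pow, hζ.norm'_eq_one (NeZero.ne m), one_pow, mul_one]
  have hpow (j : Fin m) : (b * ζ ^ (j : ℕ)) ^ m = t * (R.eval l₀ / h.eval l₀) := by
    rw [mul_pow, ← pow_mul, mul_comm _ m, pow_mul, hζ.pow_eq_one, one_pow, mul_one, hb]
  have hZj (j : Fin m) := hZ _ ((hnorm j).trans_lt hbu)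
  have hZs (j : Fin m) := hδs (ball_subset_closedBall (hZj j).2.1)
  apply roots_filter_eq_map
  · exact hζ.injective_of_add_mul_eq hb0 (fun j : Fin m => (hZj j).2.2.1)
      fun j => (hZs j).2.2
  · intro j
    simpa [dist_eq_norm] using (hZj j).2.1
  · intro j
    exact isRoot_of_add_mul_eq (hGm _ (hZs j).2.1) (hpow j) (hZj j).2.2.1
  · intro j
    obtain ⟨hK, -, hfix, -⟩ := hZj j
    obtain ⟨hzs, hhz, hGz⟩ := hZs j
    have hs : s ∈ 𝓝 (Z (b * ζ ^ (j : ℕ))) := hso.mem_nhds hzs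
    have hG' := (hGd.differentiableAt hs).hasDerivAt
    refine derivative_eval_ne_zero_of_add_mul_eq (NeZero.ne m)
      ((h.continuousAt.eventually_ne hhz).mono hGm) (hpow j) hG' hfix
      (mul_ne_zero (mul_ne_zero hb0 (pow_ne_zero _ (hζ.ne_zero (NeZero.ne m)))) hGz) hhz
      ((norm_mul _ _).trans_lt (lt_of_le_of_lt (by gcongr; exact hG'.le_of_lipschitzOn hs hLip) hK))
  · intro z hz hroot
    have hzδ : z ∈ closedBall l₀ δ := by rw [mem_closedBall, dist_eq_norm]; exact hz.le
    obtain ⟨-, hhz, hGz⟩ := hδs hzδ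
    obtain ⟨j, hj⟩ :=
      hζ.exists_add_mul_eq_of_isRoot (hGm z hhz) hb (mul_ne_zero hb0 hGz) hroot hhz
    exact ⟨j, ((hZj j).2.2.2 z hzδ hj).symm⟩

theorem norm_ofReal_mul_cpow_inv_natCast (a : ℂ) (t : ℝ) (m : ℕ) :
    ‖((t : ℂ) * a) ^ ((m : ℂ)⁻¹)‖ = ‖a‖ ^ ((m : ℝ)⁻¹) * |t| ^ ((m : ℝ)⁻¹) := by
  rw [Complex.norm_cpow_inv_nat, norm_mul, Complex.norm_real, Real.norm_eq_abs,
    Real.mul_rpow (abs_nonneg t) (norm_nonneg a), mul_comm]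

theorem Complex.exp_two_pi_mul_I_mul_div_eq_pow (j m : ℕ) :
    Complex.exp (2 * π * Complex.I * j / m) = Complex.exp (2 * π * Complex.I / m) ^ j := by
  rw [← Complex.exp_nat_mul]; ring_nf

theorem perturbed_root_expansion_general (m : ℕ) (hm : 1 ≤ m) (p r : ℝ[X])
    (l₀ : ℂ) (h : ℂ[X])
    (hfact : p.map (algebraMap ℝ ℂ) = (X - C l₀) ^ m * h)
    (hh : h.eval l₀ ≠ 0) (hr : (aeval l₀ r : ℂ) ≠ 0) :
    ∃ δ > (0 : ℝ), ∃ ε > (0 : ℝ), ∃ Λ : ℝ → Fin m → ℂ, ∃ c : ℝ → ℂ,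
      ∃ e : ℝ → Fin m → ℂ,
      (∀ t : ℝ, (c t) ^ m = (t : ℂ) * (aeval l₀ r) / h.eval l₀) ∧
      (∀ t : ℝ, ∀ j : Fin m,
        Λ t j = l₀ + c t * Complex.exp (2 * Real.pi * Complex.I * (j : ℕ) / m)
          + e t j) ∧
      (∀ j : Fin m,
        (fun t : ℝ => e t j) =o[nhds (0 : ℝ)] fun t : ℝ => |t| ^ ((m : ℝ)⁻¹)) ∧
      (∀ t : ℝ, t ≠ 0 → |t| < ε →
        Multiset.filter (fun z => ‖z - l₀‖ < δ)
            (((p - C t * r).map (algebraMap ℝ ℂ)).roots) =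
          Multiset.map (Λ t) Finset.univ.val) := by
  have : NeZero m := ⟨by omega⟩
  have hR : (r.map (algebraMap ℝ ℂ)).eval l₀ = aeval l₀ r := eval_map_algebraMap r l₀
  set ζ := Complex.exp (2 * π * Complex.I / m)
  have hζ : IsPrimitiveRoot ζ m := Complex.isPrimitiveRoot_exp m (NeZero.ne m)
  obtain ⟨δ, hδ, u, hu, Z, hZo, hroots⟩ := exists_roots_pow_mul_sub_C_mul hζ hh (hR ▸ hr)
  set c : ℝ → ℂ := fun t => ((t : ℂ) * (aeval l₀ r / h.eval l₀)) ^ ((m : ℂ)⁻¹)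
  have hcO : c =O[𝓝 0] fun t => |t| ^ ((m : ℝ)⁻¹) :=
    IsBigO.of_bound _ (Eventually.of_forall fun t => by
      rw [norm_ofReal_mul_cpow_inv_natCast, Real.norm_of_nonneg (by positivity)])
  have hc0 : Tendsto c (𝓝 0) (𝓝 0) := by
    refine hcO.trans_tendsto ?_
    simpa [Real.zero_rpow (inv_ne_zero (Nat.cast_ne_zero.2 (NeZero.ne m)))] using
      (continuous_abs.tendsto (0 : ℝ)).rpow_const (p := (m : ℝ)⁻¹) (Or.inr (by positivity))
  obtain ⟨ε, hε, hcu⟩ := Metric.eventually_nhds_iff.1 (hc0.eventually (ball_mem_nhds 0 hu))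
  refine ⟨δ, hδ, ε, hε, fun t j => Z (c t * ζ ^ (j : ℕ)), c,
    fun t j => Z (c t * ζ ^ (j : ℕ)) - l₀ - c t * ζ ^ (j : ℕ), fun t => ?_, fun t j => ?_,
    fun j => ?_, fun t ht htε => ?_⟩
  · rw [Complex.cpow_nat_inv_pow _ (NeZero.ne m), mul_div_assoc]
  · rw [Complex.exp_two_pi_mul_I_mul_div_eq_pow]; ring
  · have hcj : Tendsto (fun t => c t * ζ ^ (j : ℕ)) (𝓝 0) (𝓝 0) := by
      simpa using hc0.mul_const (ζ ^ (j : ℕ))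
    exact (hZo.comp_tendsto hcj).trans_isBigO
      ((hcO.const_mul_left (ζ ^ (j : ℕ))).congr_left fun t => mul_comm _ _)
  · have hmap : (p - C t * r).map (algebraMap ℝ ℂ) =
        (X - C l₀) ^ m * h - C (t : ℂ) * r.map (algebraMap ℝ ℂ) := by
      rw [Polynomial.map_sub, hfact, Polynomial.map_mul, Polynomial.map_C]; rfl
    rw [hmap]
    refine hroots t (c t) ?_ ?_ ?_
    · rw [Complex.cpow_nat_inv_pow _ (NeZero.ne m), hR]
    · exact (Complex.cpow_ne_zero_iff_of_exponent_ne_zero (by simp [NeZero.ne m])).2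
        (mul_ne_zero (by exact_mod_cast ht) (div_ne_zero hr hh))
    · simpa using hcu (by simpa using htε)

/-- Puiseux-type expansion of perturbed roots: if `λ₀` is a root of
multiplicity `m` of the monic real polynomial `p`, `p = (λ−λ₀)^m h` with `h(λ₀) ≠ 0`,
and `r(λ₀) ≠ 0`, then for `t → 0` the polynomial `p − t r` has exactly `m` roots near
`λ₀` (counted with multiplicity), given by
`λⱼ(t) = λ₀ + (t r(λ₀)/h(λ₀))^{1/m} ωⱼ + o(|t|^{1/m})` with `ωⱼ` the `m`-th roots of
unity. -/
theorem perturbed_root_expansion (n m : ℕ) (hm : 1 ≤ m) (p r : ℝ[X])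
    (hp : p.Monic) (hdeg : p.natDegree = n) (l₀ : ℂ) (h : ℂ[X])
    (hfact : p.map (algebraMap ℝ ℂ) = (X - C l₀) ^ m * h)
    (hh : h.eval l₀ ≠ 0) (hr : (aeval l₀ r : ℂ) ≠ 0) :
    ∃ δ > (0 : ℝ), ∃ ε > (0 : ℝ), ∃ Λ : ℝ → Fin m → ℂ, ∃ c : ℝ → ℂ,
      ∃ e : ℝ → Fin m → ℂ,
      (∀ t : ℝ, (c t) ^ m = (t : ℂ) * (aeval l₀ r) / h.eval l₀) ∧
      (∀ t : ℝ, ∀ j : Fin m,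
        Λ t j = l₀ + c t * Complex.exp (2 * Real.pi * Complex.I * (j : ℕ) / m)
          + e t j) ∧
      (∀ j : Fin m,
        (fun t : ℝ => e t j) =o[nhds (0 : ℝ)] fun t : ℝ => |t| ^ ((m : ℝ)⁻¹)) ∧
      (∀ t : ℝ, t ≠ 0 → |t| < ε →
        Multiset.filter (fun z => ‖z - l₀‖ < δ)
            (((p - C t * r).map (algebraMap ℝ ℂ)).roots) =
          Multiset.map (Λ t) Finset.univ.val) :=
  perturbed_root_expansion_general m hm p r l₀ h hfact hh hr
end
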